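/- For h, ℓ in ℤ^d \ {0} with d ≥ 3, the norm of the bilinear map P_{hℓ} : h^⊥ × ℓ^⊥ → (h+ℓ)^⊥ defined by P_{hℓ}(a,b) := ((a · ℓ)/|ℓ|) · Π_{h+ℓ}(b) equals sin θ_{hℓ}, where θ_{hℓ} ∈ [0,π] is the angle between h and ℓ. -/

import Mathlib

open scoped BigOperators
noncomputable section

/-- The lattice point `h ∈ ℤ^d` viewed as a vector of `ℝ^d`. -/
def rvec {d : ℕ} (h : Fin d → ℤ) : EuclideanSpace ℝ (Fin d) :=
  (WithLp.equiv 2 (Fin d → ℝ)).symm (fun i => (h i : ℝ))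

/-- The lattice point `h ∈ ℤ^d` viewed as a vector of `ℂ^d`. -/
def cvec {d : ℕ} (h : Fin d → ℤ) : EuclideanSpace ℂ (Fin d) :=
  (WithLp.equiv 2 (Fin d → ℂ)).symm (fun i => (h i : ℂ))

/-- The bilinear map `P_{hℓ}(a,b) = ((a·ℓ)/|ℓ|) Π_{h+ℓ} b`, where `Π_k` is the (Hermitian)
orthogonal projection of `ℂ^d` onto `k^⊥`. -/
def Phl {d : ℕ} (h ℓ : Fin d → ℤ) (a b : EuclideanSpace ℂ (Fin d)) :
    EuclideanSpace ℂ (Fin d) :=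
  ((∑ i, a i * (ℓ i : ℂ)) / (‖rvec ℓ‖ : ℂ)) •
    ((Submodule.orthogonalProjectionOnto ((ℂ ∙ cvec (h + ℓ))ᗮ) b : (ℂ ∙ cvec (h + ℓ))ᗮ) :
      EuclideanSpace ℂ (Fin d))

/-- The set of admissible constants `Q` for the bilinear map `P_{hℓ}` restricted to
`h^⊥ × ℓ^⊥` (bilinear-dot-product orthogonality with the real vectors `h`, `ℓ`). -/
def bilinSet {d : ℕ} (h ℓ : Fin d → ℤ) : Set ℝ :=
  {Q : ℝ | 0 ≤ Q ∧ ∀ a b : EuclideanSpace ℂ (Fin d),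
    (∑ i, (h i : ℂ) * a i) = 0 → (∑ i, (ℓ i : ℂ) * b i) = 0 →
      ‖Phl h ℓ a b‖ ≤ Q * ‖a‖ * ‖b‖}

/-!
Write `θ` for the angle between `h` and `ℓ`. If `a · h = 0`, then `a · ℓ = a · v`, where `v` is the
component of `ℓ` orthogonal to `h`, and `|v| = |ℓ| sin θ`; with Cauchy–Schwarz and `‖Π‖ ≤ 1` this
gives the bound `sin θ`. Equality is attained at `a = v` and any real `b ≠ 0` orthogonal to both
`h` and `ℓ`, which exists because `d ≥ 3`: such a `b` is fixed by `Π_{h+ℓ}`, and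
`a · ℓ = |v|² = |ℓ| sin θ |a|`.
-/

open Module InnerProductGeometry
open scoped InnerProductSpace

lemma finrank_span_singleton_le_one {K V : Type*} [DivisionRing K] [AddCommGroup V] [Module K V]
    (x : V) : finrank K (K ∙ x) ≤ 1 := by
  simpa using finrank_span_le_card (R := K) ({x} : Set V)

lemma exists_ne_zero_inner_eq_zero_of_two_lt_finrank {𝕜 E : Type*} [RCLike 𝕜]
    [NormedAddCommGroup E] [InnerProductSpace 𝕜 E] [FiniteDimensional 𝕜 E]
    (hE : 2 < finrank 𝕜 E) (x y : E) : ∃ w ≠ 0, ⟪x, w⟫_𝕜 = 0 ∧ ⟪y, w⟫_𝕜 = 0 := by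
  set K := (𝕜 ∙ x) ⊔ (𝕜 ∙ y)
  have hK : finrank 𝕜 K ≤ 2 :=
    (Submodule.finrank_add_le_finrank_add_finrank _ _).trans
      (add_le_add (finrank_span_singleton_le_one x) (finrank_span_singleton_le_one y))
  have hKperp : Kᗮ ≠ ⊥ := by
    intro hbot
    have := K.finrank_add_finrank_orthogonal
    rw [hbot, finrank_bot] at this
    omega
  obtain ⟨w, hw, hw0⟩ := (Submodule.ne_bot_iff _).mp hKperp
  rw [← Submodule.inf_orthogonal, Submodule.mem_inf,
    Submodule.mem_orthogonal_singleton_iff_inner_right,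
    Submodule.mem_orthogonal_singleton_iff_inner_right] at hw
  exact ⟨w, hw0, hw⟩

section RealInnerProductSpace
variable {V : Type*} [NormedAddCommGroup V] [InnerProductSpace ℝ V]

lemma real_inner_starProjection_self (K : Submodule ℝ V) [K.HasOrthogonalProjection] (y : V) :
    ⟪y, K.starProjection y⟫_ℝ = ‖K.starProjection y‖ ^ 2 := by
  rw [← real_inner_self_eq_norm_sq, K.inner_starProjection_left_eq_right,
    Submodule.starProjection_eq_self_iff.mpr (K.starProjection_apply_mem y)]

lemma norm_starProjection_orthogonal_singleton (x y : V) :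
    ‖(ℝ ∙ x)ᗮ.starProjection y‖ = Real.sin (angle x y) * ‖y‖ := by
  rcases eq_or_ne x 0 with rfl | hx
  · simp [Submodule.starProjection_top]
  have hx' : ‖x‖ ≠ 0 := norm_ne_zero_iff.mpr hx
  have hsq : ‖(ℝ ∙ x)ᗮ.starProjection y‖ ^ 2 = ‖y‖ ^ 2 - ⟪x, y⟫_ℝ ^ 2 / ‖x‖ ^ 2 := by
    rw [Submodule.starProjection_orthogonal_val, Submodule.starProjection_singleton,
      ← real_inner_self_eq_norm_sq, inner_sub_left, inner_sub_right, inner_sub_right]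
    simp only [RCLike.ofReal_real_eq_id, id, real_inner_smul_left, real_inner_smul_right,
      real_inner_self_eq_norm_sq, real_inner_comm x y, norm_smul, Real.norm_eq_abs, mul_pow,
      sq_abs]
    field_simp
    ring
  have hsin : (Real.sin (angle x y) * ‖y‖) ^ 2 = ‖y‖ ^ 2 - ⟪x, y⟫_ℝ ^ 2 / ‖x‖ ^ 2 := by
    rw [mul_pow, Real.sin_sq, cos_angle]
    rcases eq_or_ne y 0 with rfl | hy
    · simp
    have hy' : ‖y‖ ≠ 0 := norm_ne_zero_iff.mpr hy
    field_simp
  rw [← sq_eq_sq₀ (norm_nonneg _) (mul_nonneg (sin_angle_nonneg x y) (norm_nonneg y)), hsq, hsin]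

end RealInnerProductSpace

def complexify {ι : Type*} (x : EuclideanSpace ℝ ι) : EuclideanSpace ℂ ι :=
  WithLp.toLp 2 fun i => (x i : ℂ)

section Complexify
variable {ι : Type*}

@[simp] lemma complexify_apply (x : EuclideanSpace ℝ ι) (i : ι) : complexify x i = x i := rfl

lemma complexify_add (x y : EuclideanSpace ℝ ι) :
    complexify (x + y) = complexify x + complexify y := by
  ext i; simp

lemma complexify_smul (c : ℝ) (x : EuclideanSpace ℝ ι) :
    complexify (c • x) = (c : ℂ) • complexify x := by
  ext i; simp

variable [Fintype ι]

lemma inner_complexify_left (x : EuclideanSpace ℝ ι) (a : EuclideanSpace ℂ ι) :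
    ⟪complexify x, a⟫_ℂ = ∑ i, (x i : ℂ) * a i := by
  simp [PiLp.inner_apply, mul_comm]

lemma inner_complexify_complexify (x y : EuclideanSpace ℝ ι) :
    ⟪complexify x, complexify y⟫_ℂ = ⟪x, y⟫_ℝ := by
  simp [PiLp.inner_apply, mul_comm]

lemma norm_complexify (x : EuclideanSpace ℝ ι) : ‖complexify x‖ = ‖x‖ := by
  simp [EuclideanSpace.norm_eq]

/-- Only the component of `y` orthogonal to `x` pairs with `a`, and its length is
`sin (angle x y) * ‖y‖`. -/
lemma norm_inner_complexify_le_sin_angle_mul (x y : EuclideanSpace ℝ ι) {a : EuclideanSpace ℂ ι}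
    (ha : ⟪complexify x, a⟫_ℂ = 0) :
    ‖⟪complexify y, a⟫_ℂ‖ ≤ Real.sin (angle x y) * ‖y‖ * ‖a‖ := by
  set v := (ℝ ∙ x)ᗮ.starProjection y
  obtain ⟨c, hc⟩ : ∃ c : ℝ, c • x = y - v := Submodule.mem_span_singleton.mp <| by
    simp [v, Submodule.starProjection_orthogonal_val]
  have hy : ⟪complexify y, a⟫_ℂ = ⟪complexify v, a⟫_ℂ := by
    rw [← sub_add_cancel y v, ← hc, complexify_add, complexify_smul, inner_add_left,
      inner_smul_left, ha, mul_zero, zero_add]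
  calc ‖⟪complexify y, a⟫_ℂ‖ = ‖⟪complexify v, a⟫_ℂ‖ := by rw [hy]
    _ ≤ ‖complexify v‖ * ‖a‖ := norm_inner_le_norm _ _
    _ = Real.sin (angle x y) * ‖y‖ * ‖a‖ := by
      rw [norm_complexify, norm_starProjection_orthogonal_singleton]

end Complexify

section Phl
variable {d : ℕ}

lemma rvec_add (h ℓ : Fin d → ℤ) : rvec (h + ℓ) = rvec h + rvec ℓ := by
  ext i; simp [rvec]

lemma rvec_ne_zero {h : Fin d → ℤ} (hh : h ≠ 0) : rvec h ≠ 0 := fun h0 =>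
  hh (funext fun i => by simpa [rvec] using congrArg (· i) h0)

lemma cvec_eq_complexify (h : Fin d → ℤ) : cvec h = complexify (rvec h) := by
  ext i; simp [cvec, rvec]

lemma inner_cvec_left (h : Fin d → ℤ) (a : EuclideanSpace ℂ (Fin d)) :
    ⟪cvec h, a⟫_ℂ = ∑ i, (h i : ℂ) * a i := by
  simp [cvec_eq_complexify, inner_complexify_left, rvec]

lemma Phl_eq_smul_starProjection (h ℓ : Fin d → ℤ) (a b : EuclideanSpace ℂ (Fin d)) :
    Phl h ℓ a b =
      (⟪cvec ℓ, a⟫_ℂ / ‖rvec ℓ‖) • (ℂ ∙ cvec (h + ℓ))ᗮ.starProjection b := by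
  simp only [Phl, inner_cvec_left, mul_comm]
  rfl

lemma norm_Phl_le (h ℓ : Fin d → ℤ) {a : EuclideanSpace ℂ (Fin d)}
    (ha : ∑ i, (h i : ℂ) * a i = 0) (b : EuclideanSpace ℂ (Fin d)) :
    ‖Phl h ℓ a b‖ ≤ Real.sin (angle (rvec h) (rvec ℓ)) * ‖a‖ * ‖b‖ := by
  rw [← inner_cvec_left, cvec_eq_complexify] at ha
  have hpair : ‖⟪cvec ℓ, a⟫_ℂ‖ / ‖rvec ℓ‖ ≤ Real.sin (angle (rvec h) (rvec ℓ)) * ‖a‖ := by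
    refine div_le_of_le_mul₀ (norm_nonneg _) (by positivity [sin_angle_nonneg (rvec h) (rvec ℓ)]) ?_
    rw [cvec_eq_complexify, mul_right_comm]
    exact norm_inner_complexify_le_sin_angle_mul _ _ ha
  rw [Phl_eq_smul_starProjection, norm_smul, norm_div, Complex.norm_real, norm_norm]
  exact mul_le_mul hpair (Submodule.norm_starProjection_apply_le _ b) (norm_nonneg _)
    (by positivity [sin_angle_nonneg (rvec h) (rvec ℓ)])

lemma Phl_complexify (h ℓ : Fin d → ℤ) (v : EuclideanSpace ℝ (Fin d))
    {w : EuclideanSpace ℝ (Fin d)} (hw : ⟪rvec h + rvec ℓ, w⟫_ℝ = 0) :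
    Phl h ℓ (complexify v) (complexify w) =
      ((⟪rvec ℓ, v⟫_ℝ / ‖rvec ℓ‖ : ℝ) : ℂ) • complexify w := by
  have hmem : complexify w ∈ (ℂ ∙ cvec (h + ℓ))ᗮ := by
    rw [Submodule.mem_orthogonal_singleton_iff_inner_right, cvec_eq_complexify, rvec_add,
      inner_complexify_complexify, hw, Complex.ofReal_zero]
  rw [Phl_eq_smul_starProjection, Submodule.starProjection_eq_self_iff.mpr hmem, cvec_eq_complexify,
    inner_complexify_complexify, Complex.ofReal_div]

lemma sin_angle_le_of_mem_bilinSet (hd : 3 ≤ d) {h ℓ : Fin d → ℤ} (hℓ : ℓ ≠ 0) {Q : ℝ}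
    (hQ : Q ∈ bilinSet h ℓ) : Real.sin (angle (rvec h) (rvec ℓ)) ≤ Q := by
  set s := Real.sin (angle (rvec h) (rvec ℓ))
  obtain ⟨w, hw0, hwh, hwℓ⟩ := exists_ne_zero_inner_eq_zero_of_two_lt_finrank
    (by rwa [finrank_euclideanSpace_fin]) (rvec h) (rvec ℓ)
  set v := (ℝ ∙ rvec h)ᗮ.starProjection (rvec ℓ)
  have hv : ‖v‖ = s * ‖rvec ℓ‖ := norm_starProjection_orthogonal_singleton _ _
  have hvh : ∑ i, (h i : ℂ) * complexify v i = 0 := by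
    rw [← inner_cvec_left, cvec_eq_complexify, inner_complexify_complexify,
      Submodule.inner_right_of_mem_orthogonal (Submodule.mem_span_singleton_self _)
        (Submodule.starProjection_apply_mem _ _), Complex.ofReal_zero]
  have hwℓ' : ∑ i, (ℓ i : ℂ) * complexify w i = 0 := by
    rw [← inner_cvec_left, cvec_eq_complexify, inner_complexify_complexify, hwℓ,
      Complex.ofReal_zero]
  have hbound := hQ.2 _ _ hvh hwℓ'
  rw [Phl_complexify h ℓ v (by rw [inner_add_left, hwh, hwℓ, add_zero]), norm_smul,
    Complex.norm_real, norm_complexify, norm_complexify, real_inner_starProjection_self,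
    hv] at hbound
  have hℓ' : ‖rvec ℓ‖ ≠ 0 := norm_ne_zero_iff.mpr (rvec_ne_zero hℓ)
  have hw' : ‖w‖ ≠ 0 := norm_ne_zero_iff.mpr hw0
  have hs : s ^ 2 ≤ s * Q := by
    rw [Real.norm_of_nonneg (by positivity)] at hbound
    field_simp at hbound
    exact hbound
  nlinarith [hQ.1, sin_angle_nonneg (rvec h) (rvec ℓ)]

end Phl

theorem Phl_norm_eq_sin (d : ℕ) (hd : 3 ≤ d) (h ℓ : Fin d → ℤ) (hℓ : ℓ ≠ 0) :
    IsLeast (bilinSet h ℓ) (Real.sin (InnerProductGeometry.angle (rvec h) (rvec ℓ))) :=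
  ⟨⟨sin_angle_nonneg _ _, fun _ b ha _ => norm_Phl_le h ℓ ha b⟩,
    fun _ hQ => sin_angle_le_of_mem_bilinSet hd hℓ hQ⟩
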